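/- arXiv:1205.4704 — 2 statements merged into one kernel-verified Lean document; each statement's English description precedes it below -/
import Mathlib

section
/- For every f in the Hardy–Sobolev space H^{1,2} of the unit disk, ‖f‖_∞ ≤ √(π+1) · ‖f‖_{1,2}, where ‖f‖_∞ is the sup norm on the closed unit disk and ‖f‖_{1,2}² = ‖f‖₂² + ‖f'‖₂². -/
/-- L² integral mean of `f` on the circle of radius `r` centered at 0. -/
noncomputable def M2 (f : ℂ → ℂ) (r : ℝ) : ℝ :=
  Real.sqrt ((1 / (2 * Real.pi)) *
    ∫ θ in (0:ℝ)..(2 * Real.pi), ‖f ((r : ℂ) * Complex.exp ((θ : ℂ) * Complex.I))‖ ^ 2)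

/-- Normalized L² norm of `f` on the boundary arc {e^{iθ} : θ₀ ≤ θ ≤ θ₀ + 2πλ}. -/
noncomputable def arcN (f : ℂ → ℂ) (θ₀ lam : ℝ) : ℝ :=
  Real.sqrt ((1 / (2 * Real.pi * lam)) *
    ∫ θ in θ₀..(θ₀ + 2 * Real.pi * lam), ‖f (Complex.exp ((θ : ℂ) * Complex.I))‖ ^ 2)

/-- Model of membership in the Hardy–Sobolev space `H^{k,2}` of the unit disk:
`f` is analytic on the open disk and its derivatives up to order `k`
extend continuously to the closed disk. -/
def HkModel (k : ℕ) (f : ℂ → ℂ) : Prop :=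
  DifferentiableOn ℂ f (Metric.ball (0:ℂ) 1) ∧
  ∀ j ≤ k, ContinuousOn (iteratedDeriv j f) (Metric.closedBall (0:ℂ) 1)

/-- Hardy–Sobolev norm `‖f‖_{k,2}` (boundary L² norms of derivatives). -/
noncomputable def sobN (k : ℕ) (f : ℂ → ℂ) : ℝ :=
  Real.sqrt (∑ j ∈ Finset.range (k + 1), (M2 (iteratedDeriv j f) 1) ^ 2)

/-- `W^{m,2}(I)` Sobolev norm on the arc (angular derivatives). -/
noncomputable def wN (m : ℕ) (f : ℂ → ℂ) (θ₀ lam : ℝ) : ℝ :=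
  Real.sqrt (∑ j ∈ Finset.range (m + 1), (1 / (2 * Real.pi * lam)) *
    ∫ θ in θ₀..(θ₀ + 2 * Real.pi * lam),
      ‖iteratedDeriv j (fun t : ℝ => f (Complex.exp ((t : ℂ) * Complex.I))) θ‖ ^ 2)


/-!
On a circle of radius `r < 1` put `h(θ) = |f(r e^{iθ})|²`. Going around the circle in both
directions from a minimum point of `h`, whose value is at most the mean of `h`, gives
`h ≤ mean h + ½ ∫ |h'|`, and `|h'| ≤ 2 |f| |f'| ≤ |f|² + |f'|²` because `r ≤ 1`. Letting `r → 1`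
bounds `|f|²` on the unit circle by `(1 + π) ‖f‖₂² + π ‖f'‖₂² ≤ (π + 1) ‖f‖²_{1,2}`, and the
maximum modulus principle carries the bound into the disk.
-/

open Set Function Filter Topology Metric intervalIntegral Real

theorem abs_sub_le_integral_abs_deriv {h h' : ℝ → ℝ} (hderiv : ∀ t, HasDerivAt h (h' t) t)
    (hcont : Continuous h') {a b : ℝ} (hab : a ≤ b) :
    |h b - h a| ≤ ∫ t in a..b, |h' t| := by
  rw [← integral_eq_sub_of_hasDerivAt (fun t _ => hderiv t) (hcont.intervalIntegrable a b)]
  exact abs_integral_le_integral_abs hab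

theorem le_average_add_half_integral_abs_deriv {h h' : ℝ → ℝ} {T : ℝ} (hT : 0 < T)
    (hh : Periodic h T) (hh' : Periodic h' T) (hderiv : ∀ t, HasDerivAt h (h' t) t)
    (hcont : Continuous h') (x : ℝ) :
    h x ≤ T⁻¹ * (∫ t in 0..T, h t) + 2⁻¹ * ∫ t in 0..T, |h' t| := by
  have h_cont : Continuous h := continuous_iff_continuousAt.2 fun t => (hderiv t).continuousAt
  obtain ⟨s, ⟨hxs, hsx⟩, hmin⟩ := isCompact_Icc.exists_isMinOn
    (nonempty_Icc.2 (by linarith : x ≤ x + T)) h_cont.continuousOn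
  have h_min_le_average : h s ≤ T⁻¹ * ∫ t in 0..T, h t := by
    have : ∫ t in x..x + T, h s ≤ ∫ t in x..x + T, h t :=
      integral_mono_on (by linarith) intervalIntegrable_const (h_cont.intervalIntegrable _ _)
        fun t ht => hmin ht
    rw [integral_const, add_sub_cancel_left, smul_eq_mul, hh.intervalIntegral_add_eq x 0,
      zero_add] at this
    rwa [inv_mul_eq_div, le_div_iff₀' hT]
  have h_left : h x - h s ≤ ∫ t in x..s, |h' t| :=
    (le_abs_self _).trans ((abs_sub_comm _ _).trans_le
      (abs_sub_le_integral_abs_deriv hderiv hcont hxs))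
  have h_right : h x - h s ≤ ∫ t in s..x + T, |h' t| := by
    rw [← hh x]
    exact (le_abs_self _).trans (abs_sub_le_integral_abs_deriv hderiv hcont hsx)
  have h_total : (∫ t in x..s, |h' t|) + ∫ t in s..x + T, |h' t| = ∫ t in 0..T, |h' t| := by
    rw [integral_add_adjacent_intervals (hcont.abs.intervalIntegrable x s)
      (hcont.abs.intervalIntegrable s (x + T))]
    simpa using (hh'.comp abs).intervalIntegral_add_eq x 0
  linarith

theorem abs_two_mul_inner_le_add_sq {F : Type*} [NormedAddCommGroup F] [InnerProductSpace ℝ F]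
    (a b : F) : |2 * inner ℝ a b| ≤ ‖a‖ ^ 2 + ‖b‖ ^ 2 := by
  rw [abs_mul, abs_two]
  calc 2 * |inner ℝ a b| ≤ 2 * (‖a‖ * ‖b‖) := by gcongr; exact abs_real_inner_le_norm a b
    _ ≤ ‖a‖ ^ 2 + ‖b‖ ^ 2 := by linarith [two_mul_le_add_sq ‖a‖ ‖b‖]

theorem sq_norm_le_average_add_half_integral {F : Type*} [NormedAddCommGroup F]
    [InnerProductSpace ℝ F] {g g' : ℝ → F} {T : ℝ} (hT : 0 < T) (hg : Periodic g T)
    (hg' : Periodic g' T) (hderiv : ∀ t, HasDerivAt g (g' t) t) (hcont : Continuous g')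
    (x : ℝ) :
    ‖g x‖ ^ 2 ≤ (T⁻¹ + 2⁻¹) * (∫ t in 0..T, ‖g t‖ ^ 2) + 2⁻¹ * ∫ t in 0..T, ‖g' t‖ ^ 2 := by
  have hg_cont : Continuous g := continuous_iff_continuousAt.2 fun t => (hderiv t).continuousAt
  have key := le_average_add_half_integral_abs_deriv (h := fun t => ‖g t‖ ^ 2)
    (h' := fun t => 2 * inner ℝ (g t) (g' t)) hT (fun t => by simp only [hg t])
    (fun t => by simp only [hg t, hg' t]) (fun t => (hderiv t).norm_sq) (by fun_prop) x
  have hint : ∫ t in 0..T, |2 * inner ℝ (g t) (g' t)| ≤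
      (∫ t in 0..T, ‖g t‖ ^ 2) + ∫ t in 0..T, ‖g' t‖ ^ 2 := by
    rw [← integral_add (Continuous.intervalIntegrable (by fun_prop) _ _)
      (Continuous.intervalIntegrable (by fun_prop) _ _)]
    exact integral_mono_on hT.le (Continuous.intervalIntegrable (by fun_prop) _ _)
      (Continuous.intervalIntegrable (by fun_prop) _ _)
      fun t _ => abs_two_mul_inner_le_add_sq _ _
  linarith

theorem M2_eq_circleMap (φ : ℂ → ℂ) (r : ℝ) :
    M2 φ r = √((2 * π)⁻¹ * ∫ θ in 0..2 * π, ‖φ (circleMap 0 r θ)‖ ^ 2) := by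
  simp [M2, circleMap_zero]

theorem sq_M2 (φ : ℂ → ℂ) (r : ℝ) :
    M2 φ r ^ 2 = (2 * π)⁻¹ * ∫ θ in 0..2 * π, ‖φ (circleMap 0 r θ)‖ ^ 2 := by
  rw [M2_eq_circleMap, sq_sqrt]
  exact mul_nonneg (by positivity) (integral_nonneg two_pi_pos.le fun _ _ => by positivity)

theorem sobN_one (f : ℂ → ℂ) : sobN 1 f = √(M2 f 1 ^ 2 + M2 (deriv f) 1 ^ 2) := by
  simp [sobN, Finset.sum_range_succ]

theorem continuousOn_intervalIntegral_circleMap {E : Type*} [NormedAddCommGroup E]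
    [NormedSpace ℝ E] {φ : ℂ → E} {c : ℂ} {R : ℝ} (hR : 0 ≤ R)
    (hφ : ContinuousOn φ (closedBall c R)) (a b : ℝ) :
    ContinuousOn (fun r => ∫ θ in a..b, φ (circleMap c r θ)) (Icc 0 R) := by
  have hcont : Continuous (uncurry fun r θ => φ (circleMap c (projIcc 0 R hR r) θ)) := by
    refine hφ.comp_continuous (by unfold circleMap; fun_prop) fun p => ?_
    have hr := (projIcc 0 R hR p.1).2
    exact closedBall_subset_closedBall hr.2 (circleMap_mem_closedBall c hr.1 p.2)
  refine (continuous_parametric_intervalIntegral_of_continuous' (μ := MeasureTheory.volume)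
    hcont a b).continuousOn.congr fun r hr => ?_
  simp [projIcc_of_mem hR hr]

theorem continuousOn_M2 {φ : ℂ → ℂ} (hφ : ContinuousOn φ (closedBall 0 1)) :
    ContinuousOn (M2 φ) (Icc 0 1) := by
  simp_rw [funext (M2_eq_circleMap φ)]
  exact (continuousOn_const.mul (continuousOn_intervalIntegral_circleMap zero_le_one
    (hφ.norm.pow 2) _ _)).sqrt

theorem sq_norm_circleMap_le {f : ℂ → ℂ} (hd : DifferentiableOn ℂ f (ball 0 1)) {r : ℝ}
    (hr : r ∈ Ico 0 1) (x : ℝ) :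
    ‖f (circleMap 0 r x)‖ ^ 2 ≤ (π + 1) * (M2 f r ^ 2 + M2 (deriv f) r ^ 2) := by
  have hmem : ∀ θ, circleMap 0 r θ ∈ ball 0 1 := fun θ => by
    simp [norm_circleMap_zero, abs_of_nonneg hr.1, hr.2]
  have hderiv : ∀ θ, HasDerivAt (f ∘ circleMap 0 r)
      (deriv f (circleMap 0 r θ) * (circleMap 0 r θ * Complex.I)) θ := fun θ =>
    (hd.differentiableAt (isOpen_ball.mem_nhds (hmem θ))).hasDerivAt.comp θ
      (hasDerivAt_circleMap 0 r θ)
  have hf'_cont : Continuous fun θ => deriv f (circleMap 0 r θ) :=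
    (hd.deriv isOpen_ball).continuousOn.comp_continuous (continuous_circleMap 0 r) hmem
  have hbound := sq_norm_le_average_add_half_integral two_pi_pos
    ((periodic_circleMap 0 r).comp f)
    (fun θ => by simp only [periodic_circleMap 0 r θ]) hderiv
    (hf'_cont.mul ((continuous_circleMap 0 r).mul continuous_const)) x
  have hderiv_le : ∫ θ in 0..2 * π,
      ‖deriv f (circleMap 0 r θ) * (circleMap 0 r θ * Complex.I)‖ ^ 2 ≤
      ∫ θ in 0..2 * π, ‖deriv f (circleMap 0 r θ)‖ ^ 2 := by
    refine integral_mono_on two_pi_pos.le (Continuous.intervalIntegrable (by fun_prop) _ _)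
      (Continuous.intervalIntegrable (by fun_prop) _ _) fun θ _ => ?_
    have : ‖circleMap 0 r θ * Complex.I‖ ≤ 1 := by
      simp [norm_circleMap_zero, abs_of_nonneg hr.1, hr.2.le]
    rw [norm_mul]
    gcongr
    exact mul_le_of_le_one_right (norm_nonneg _) this
  have hB : 0 ≤ M2 (deriv f) r ^ 2 := sq_nonneg _
  have hcoeff : (π + 1) * (2 * π)⁻¹ = (2 * π)⁻¹ + 2⁻¹ := by field_simp; ring
  rw [sq_M2] at hB
  rw [sq_M2, sq_M2, ← mul_add, ← mul_assoc, hcoeff]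
  simp only [comp_apply] at hbound
  linarith

theorem sq_norm_circleMap_one_le {f : ℂ → ℂ} (hd : DifferentiableOn ℂ f (ball 0 1))
    (hc : ContinuousOn f (closedBall 0 1))
    (hc' : ContinuousOn (deriv f) (closedBall 0 1)) (x : ℝ) :
    ‖f (circleMap 0 1 x)‖ ^ 2 ≤ (π + 1) * (M2 f 1 ^ 2 + M2 (deriv f) 1 ^ 2) := by
  have hradii : Ico (0 : ℝ) 1 ∈ 𝓝[<] 1 := Ico_mem_nhdsLT zero_lt_one
  have hle : 𝓝[<] (1 : ℝ) ≤ 𝓝[Icc 0 1] 1 :=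
    nhdsWithin_le_of_mem (mem_of_superset hradii Ico_subset_Icc_self)
  have hlhs : ContinuousOn (fun r => ‖f (circleMap 0 r x)‖ ^ 2) (Icc 0 1) :=
    (hc.comp (by unfold circleMap; fun_prop : Continuous fun r : ℝ => circleMap 0 r x).continuousOn
      fun r hr => closedBall_subset_closedBall hr.2
        (circleMap_mem_closedBall 0 hr.1 x)).norm.pow 2
  have hrhs : ContinuousOn (fun r => (π + 1) * (M2 f r ^ 2 + M2 (deriv f) r ^ 2)) (Icc 0 1) :=
    continuousOn_const.mul (((continuousOn_M2 hc).pow 2).add ((continuousOn_M2 hc').pow 2))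
  have h1 : (1 : ℝ) ∈ Icc 0 1 := right_mem_Icc.2 zero_le_one
  exact le_of_tendsto_of_tendsto ((hlhs 1 h1).tendsto.mono_left hle)
    ((hrhs 1 h1).tendsto.mono_left hle)
    (eventually_of_mem hradii fun r hr => sq_norm_circleMap_le hd hr x)

/-- Sup norm bound in `H^{1,2}`: `‖f‖_∞ ≤ √(π+1) ‖f‖_{1,2}`. -/
theorem sup_le_sobolev (f : ℂ → ℂ) (hf : HkModel 1 f) :
    ∀ z ∈ Metric.closedBall (0:ℂ) 1,
      ‖f z‖ ≤ Real.sqrt (Real.pi + 1) * sobN 1 f := by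
  intro z hz
  obtain ⟨hd, hcont⟩ := hf
  have hc : ContinuousOn f (closedBall 0 1) := by simpa using hcont 0 zero_le_one
  have hc' : ContinuousOn (deriv f) (closedBall 0 1) := by simpa using hcont 1 le_rfl
  have hclosure : closure (ball (0 : ℂ) 1) = closedBall 0 1 := closure_ball 0 one_ne_zero
  refine Complex.norm_le_of_forall_mem_frontier_norm_le isBounded_ball
    ⟨hd, hclosure ▸ hc⟩ (fun w hw => ?_) (hclosure ▸ hz)
  rw [frontier_ball 0 one_ne_zero, ← abs_one, ← range_circleMap] at hw
  obtain ⟨x, rfl⟩ := hw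
  rw [sobN_one, ← sqrt_mul (by positivity)]
  exact le_sqrt_of_sq_le (sq_norm_circleMap_one_le hd hc hc' x)
end

section
/- Let a > 1 and let I be the semicircle {e^{iθ} : −π/2 ≤ θ ≤ π/2}. Set J_n = (1/π) ∫_{−π/2}^{π/2} (1 − 2a cos θ + a²)^n dθ. Then J_n = (πna)^{−1}(1 + a²)^{n+1}(1 + o(1)) as n → ∞. -/
/-!
Writing `c = 2a/(1+a²) ∈ (0,1)`, the integrand is `(1+a²)ⁿ (1 - c cos θ)ⁿ`, and by symmetry
`J_n = (2/π)(1+a²)ⁿ ∫₀^{π/2} (1 - c sin t)ⁿ dt`. The last integral is governed by the endpoint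
`t = 0`, where `1 - c sin t ≈ 1 - c t`: since `β t ≤ c sin t ≤ c t` near `0` for every `β < c`,
`n ∫₀^{π/2} (1 - c sin t)ⁿ` is squeezed between `n ∫₀^δ (1 - β t)ⁿ + O(n rⁿ)` with `r < 1`
and `n ∫₀^1 (1 - c t)ⁿ`, whose limits are `1/β` and `1/c`.
-/

open Filter Real Set intervalIntegral Topology MeasureTheory

theorem integral_one_sub_mul_pow {β : ℝ} (hβ : β ≠ 0) (δ : ℝ) (n : ℕ) :
    ∫ t in (0:ℝ)..δ, (1 - β * t) ^ n = (1 - (1 - β * δ) ^ (n + 1)) / (β * (n + 1)) := by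
  rw [integral_comp_sub_mul (fun x => x ^ n) hβ, integral_pow, mul_zero, sub_zero, smul_eq_mul,
    one_pow]
  field_simp

theorem tendsto_natCast_mul_integral_one_sub_mul_pow {β δ : ℝ} (hβ : 0 < β)
    (hβδ : |1 - β * δ| < 1) :
    Tendsto (fun n : ℕ => n * ∫ t in (0:ℝ)..δ, (1 - β * t) ^ n) atTop (𝓝 (1 / β)) := by
  have hpow : Tendsto (fun n : ℕ => (1 - β * δ) ^ (n + 1)) atTop (𝓝 0) :=
    (tendsto_pow_atTop_nhds_zero_of_abs_lt_one hβδ).comp (tendsto_add_atTop_nat 1)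
  have h := (tendsto_natCast_div_add_atTop (1 : ℝ)).mul
    ((tendsto_const_nhds (x := (1 : ℝ))).sub hpow |>.div_const β)
  rw [one_mul, sub_zero] at h
  refine h.congr fun n => ?_
  rw [integral_one_sub_mul_pow hβ.ne']
  field_simp

theorem integral_pow_mono_on {f g : ℝ → ℝ} {a b : ℝ} (hab : a ≤ b) (hf : Continuous f)
    (hg : Continuous g) (hf0 : ∀ x ∈ Icc a b, 0 ≤ f x) (hfg : ∀ x ∈ Icc a b, f x ≤ g x) (n : ℕ) :
    ∫ x in a..b, f x ^ n ≤ ∫ x in a..b, g x ^ n :=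
  integral_mono_on hab ((hf.pow n).intervalIntegrable a b) ((hg.pow n).intervalIntegrable a b)
    fun x hx => pow_le_pow_left₀ (hf0 x hx) (hfg x hx) n

theorem exists_mul_le_sin {β : ℝ} (hβ : β < 1) :
    ∃ δ, 0 < δ ∧ δ ≤ 1 ∧ ∀ t ∈ Icc 0 δ, β * t ≤ sin t := by
  have hlim : Tendsto (fun δ : ℝ => 1 - δ ^ 2 / 6) (𝓝[>] 0) (𝓝 1) := by
    have : Continuous (fun δ : ℝ => 1 - δ ^ 2 / 6) := by fun_prop
    simpa using this.continuousWithinAt.tendsto (x := 0) (s := Ioi 0)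
  obtain ⟨δ, hβδ, hδ0, hδ1⟩ :=
    ((hlim.eventually (eventually_gt_nhds hβ)).and (Ioc_mem_nhdsGT one_pos)).exists
  refine ⟨δ, hδ0, hδ1, fun t ht => ?_⟩
  have ht2 : t ^ 2 ≤ δ ^ 2 := pow_le_pow_left₀ ht.1 ht.2 2
  nlinarith [sin_ge_sub_cube ht.1, mul_nonneg ht.1 (sub_nonneg.2 ht2),
    mul_le_mul_of_nonneg_right hβδ.le ht.1]

theorem one_sub_mul_sin_nonneg {c : ℝ} (hc0 : 0 ≤ c) (hc1 : c ≤ 1) (t : ℝ) :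
    0 ≤ 1 - c * sin t := by
  nlinarith [sin_le_one t, neg_one_le_sin t]

theorem integral_one_sub_mul_pow_le_integral_one_sub_mul_sin_pow {c : ℝ} (hc0 : 0 ≤ c)
    (hc1 : c ≤ 1) (n : ℕ) :
    ∫ t in (0:ℝ)..1, (1 - c * t) ^ n ≤ ∫ t in (0:ℝ)..(π / 2), (1 - c * sin t) ^ n :=
  calc ∫ t in (0:ℝ)..1, (1 - c * t) ^ n ≤ ∫ t in (0:ℝ)..1, (1 - c * sin t) ^ n :=
        integral_pow_mono_on (f := fun t => 1 - c * t) (g := fun t => 1 - c * sin t)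
          zero_le_one (by fun_prop) (by fun_prop) (fun t ht => by nlinarith [ht.2])
          (fun t ht => by nlinarith [sin_le ht.1]) n
    _ ≤ ∫ t in (0:ℝ)..(π / 2), (1 - c * sin t) ^ n :=
        integral_mono_interval le_rfl zero_le_one (by linarith [pi_gt_three])
          (Eventually.of_forall fun t => pow_nonneg (one_sub_mul_sin_nonneg hc0 hc1 t) n)
          ((by fun_prop : Continuous fun t => (1 - c * sin t) ^ n).intervalIntegrable _ _)

theorem integral_one_sub_mul_sin_pow_le {c β δ : ℝ} (hc0 : 0 ≤ c) (hc1 : c ≤ 1) (hδ0 : 0 ≤ δ)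
    (hδ : δ ≤ π / 2) (hβ : ∀ t ∈ Icc 0 δ, β * t ≤ c * sin t) (n : ℕ) :
    ∫ t in (0:ℝ)..(π / 2), (1 - c * sin t) ^ n
      ≤ (∫ t in (0:ℝ)..δ, (1 - β * t) ^ n) + (π / 2 - δ) * (1 - c * sin δ) ^ n := by
  have hint : ∀ u v : ℝ, IntervalIntegrable (fun t => (1 - c * sin t) ^ n) volume u v :=
    fun u v => (by fun_prop : Continuous fun t => (1 - c * sin t) ^ n).intervalIntegrable u v
  rw [← integral_add_adjacent_intervals (hint 0 δ) (hint δ (π / 2))]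
  gcongr ?_ + ?_
  · exact integral_pow_mono_on (f := fun t => 1 - c * sin t) (g := fun t => 1 - β * t) hδ0
      (by fun_prop) (by fun_prop)
      (fun t _ => one_sub_mul_sin_nonneg hc0 hc1 t) (fun t ht => by linarith [hβ t ht]) n
  · calc ∫ t in δ..(π / 2), (1 - c * sin t) ^ n ≤ ∫ _ in δ..(π / 2), (1 - c * sin δ) ^ n :=
          integral_pow_mono_on (f := fun t => 1 - c * sin t)
            (g := fun _ => 1 - c * sin δ) hδ (by fun_prop) continuous_const
            (fun t _ => one_sub_mul_sin_nonneg hc0 hc1 t) (fun t ht => by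
              have := sin_le_sin_of_le_of_le_pi_div_two (by linarith [pi_pos]) ht.2 ht.1
              nlinarith) n
      _ = (π / 2 - δ) * (1 - c * sin δ) ^ n := by simp

theorem tendsto_natCast_mul_integral_one_sub_mul_sin_pow {c : ℝ} (hc0 : 0 < c) (hc1 : c < 1) :
    Tendsto (fun n : ℕ => n * ∫ t in (0:ℝ)..(π / 2), (1 - c * sin t) ^ n) atTop (𝓝 (1 / c)) := by
  rw [tendsto_order]
  constructor
  · intro b hb
    have hlow := tendsto_natCast_mul_integral_one_sub_mul_pow (δ := 1) hc0
      (by rw [abs_lt]; constructor <;> linarith)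
    filter_upwards [hlow.eventually (eventually_gt_nhds hb)] with n hn
    exact hn.trans_le (mul_le_mul_of_nonneg_left
      (integral_one_sub_mul_pow_le_integral_one_sub_mul_sin_pow hc0.le hc1.le n) n.cast_nonneg)
  · intro b hb
    have hb0 : 0 < b := (one_div_pos.2 hc0).trans hb
    obtain ⟨β, hbβ, hβc⟩ := exists_between (show 1 / b < c by rwa [one_div_lt hb0 hc0])
    have hβ0 : 0 < β := (one_div_pos.2 hb0).trans hbβ
    obtain ⟨δ, hδ0, hδ1, hsin⟩ := exists_mul_le_sin (show β / c < 1 by rwa [div_lt_one hc0])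
    have hδπ : δ ≤ π / 2 := hδ1.trans (by linarith [pi_gt_three])
    have hsinδ : 0 < sin δ := sin_pos_of_pos_of_lt_pi hδ0 (by linarith [pi_pos])
    have hup := (tendsto_natCast_mul_integral_one_sub_mul_pow hβ0 (δ := δ)
        (by rw [abs_lt]; constructor <;> nlinarith)).add
      ((tendsto_self_mul_const_pow_of_lt_one (one_sub_mul_sin_nonneg hc0.le hc1.le δ)
        (by nlinarith)).const_mul (π / 2 - δ))
    rw [mul_zero, add_zero] at hup
    filter_upwards [hup.eventually (eventually_lt_nhds (by rwa [one_div_lt hβ0 hb0]))] with n hn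
    refine lt_of_le_of_lt ?_ hn
    calc (n : ℝ) * ∫ t in (0:ℝ)..(π / 2), (1 - c * sin t) ^ n
        ≤ n * ((∫ t in (0:ℝ)..δ, (1 - β * t) ^ n) + (π / 2 - δ) * (1 - c * sin δ) ^ n) := by
          gcongr
          exact integral_one_sub_mul_sin_pow_le hc0.le hc1.le hδ0.le hδπ
            (fun t ht => by
              have := mul_le_mul_of_nonneg_left (hsin t ht) hc0.le
              rwa [← mul_assoc, mul_div_cancel₀ _ hc0.ne'] at this) n
      _ = _ := by ring

theorem integral_comp_cos_eq_two_mul_integral_comp_sin {f : ℝ → ℝ} (hf : Continuous f) :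
    ∫ θ in (-(π / 2))..(π / 2), f (cos θ) = 2 * ∫ t in (0:ℝ)..(π / 2), f (sin t) := by
  have hint : ∀ u v : ℝ, IntervalIntegrable (fun θ => f (cos θ)) volume u v :=
    fun u v => (hf.comp continuous_cos).intervalIntegrable u v
  have hneg : ∫ θ in (-(π / 2))..0, f (cos θ) = ∫ θ in (0:ℝ)..(π / 2), f (cos θ) := by
    simpa using (integral_comp_neg (a := 0) (b := π / 2) fun θ => f (cos θ)).symm
  have hsin : ∫ θ in (0:ℝ)..(π / 2), f (cos θ) = ∫ t in (0:ℝ)..(π / 2), f (sin t) := by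
    simpa [sin_pi_div_two_sub] using
      integral_comp_sub_left (a := 0) (b := π / 2) (fun t => f (sin t)) (π / 2)
  rw [← integral_add_adjacent_intervals (hint _ 0) (hint 0 _), hneg, hsin, two_mul]

/-- Laplace asymptotics on the semicircle:
`J_n = (1/π)∫_{-π/2}^{π/2}(1 − 2a cos θ + a²)^n dθ` satisfies
`(πna) J_n / (1+a²)^{n+1} → 1`. -/
theorem laplace_semicircle (a : ℝ) (ha : 1 < a) :
    Filter.Tendsto
      (fun n : ℕ =>
        (Real.pi * n * a) *
          ((1 / Real.pi) *
            ∫ θ in (-(Real.pi / 2))..(Real.pi / 2), (1 - 2 * a * Real.cos θ + a ^ 2) ^ n) /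
          (1 + a ^ 2) ^ (n + 1))
      Filter.atTop (nhds 1) := by
  have ha2 : 0 < 1 + a ^ 2 := by positivity
  set c := 2 * a / (1 + a ^ 2) with hc
  have hc0 : 0 < c := by positivity
  have hc1 : c < 1 := by rw [div_lt_one ha2]; nlinarith
  have hfactor : ∀ θ, 1 - 2 * a * cos θ + a ^ 2 = (1 + a ^ 2) * (1 - c * cos θ) := fun θ => by
    rw [hc]; field_simp; ring
  have h := (tendsto_natCast_mul_integral_one_sub_mul_sin_pow hc0 hc1).const_mul c
  rw [mul_one_div_cancel hc0.ne'] at h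
  refine h.congr fun n => ?_
  have hsym := integral_comp_cos_eq_two_mul_integral_comp_sin
    (f := fun x => (1 - c * x) ^ n) (by fun_prop)
  simp_rw [hfactor, mul_pow, intervalIntegral.integral_const_mul, hsym]
  rw [hc]
  field_simp
  ring
end
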